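/- Let c₁, c₂ > 0 and let T : [0,∞) → ℝ be twice continuously differentiable satisfying the hypergeometric equation u(1+u)T''(u) + [(c₁+c₂) + (c₁+2)u]T'(u) + c₁T(u) = 0 for u > 0, with T(0) = 1 and T'(0) = −c₁/(c₁+c₂). Then T(u) = ∫₀¹ B_{c₁,c₂}(dy)/(1+uy) for all u ≥ 0, where B_{c₁,c₂} is the Beta(c₁,c₂) distribution. -/

import Mathlib

/-!
Put `a = c₁ + c₂ - 1`. The hypergeometric operator is the derivative of
`u (1 + u) T' + (a + c₁ u) T`, so with `T 0 = 1` the solution satisfies the first-order equation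
`u (1 + u) T' + (a + c₁ u) T = a`. The Beta transform `G u = ∫ B(dy) / (1 + u y)` satisfies
the same equation, by integrating by parts against `y ^ c₁ (1 - y) ^ c₂ u / (1 + u y)`. Hence
`D = T - G` solves the homogeneous equation, whose integrating factor `u ^ a (1 + u) ^ (c₁ - a)`
makes `D u ^ a (1 + u) ^ (c₁ - a)` constant. This constant equals
`(D u / u) u ^ (c₁ + c₂) (1 + u) ^ (c₁ - a)`, which tends to `0` as `u → 0⁺` because
`D 0 = 0`, `D` is differentiable at `0` and `c₁ + c₂ > 0`; so `D = 0`.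
-/

open MeasureTheory

/-- Beta(a,b) density on [0,1]. -/
noncomputable def betaDensity (a b u : ℝ) : ℝ :=
  Real.Gamma (a + b) / (Real.Gamma a * Real.Gamma b) * u ^ (a - 1) * (1 - u) ^ (b - 1)

open Set Filter Topology ProbabilityTheory

lemma eq_of_hasDerivAt_eq_zero {f : ℝ → ℝ} {a b : ℝ} (hab : a ≤ b)
    (hf : ContinuousOn f (Icc a b)) (hf' : ∀ x ∈ Ioo a b, HasDerivAt f 0 x) : f b = f a := by
  rcases hab.eq_or_lt with rfl | hab
  · rfl
  obtain ⟨_, _, h⟩ := exists_hasDerivAt_eq_slope f (fun _ => 0) hab hf hf'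
  rw [eq_comm, div_eq_zero_iff, sub_eq_zero] at h
  exact h.resolve_right (sub_pos.2 hab).ne'

lemma hasDerivAt_rpow_mul_one_sub_rpow {p q x : ℝ} (hx : x ∈ Ioo 0 1) :
    HasDerivAt (fun y => y ^ p * (1 - y) ^ q)
      (x ^ (p - 1) * (1 - x) ^ (q - 1) * (p * (1 - x) - q * x)) x := by
  have h1x : 0 < 1 - x := sub_pos.2 hx.2
  have hq : HasDerivAt (fun y => (1 - y) ^ q) (q * (1 - x) ^ (q - 1) * -1) x :=
    (Real.hasDerivAt_rpow_const (Or.inl h1x.ne')).comp x ((hasDerivAt_id x).const_sub 1)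
  refine ((Real.hasDerivAt_rpow_const (p := p) (Or.inl hx.1.ne')).mul hq).congr_deriv ?_
  have hx0 := hx.1.ne'
  rw [Real.rpow_sub_one hx0, Real.rpow_sub_one h1x.ne']
  field_simp
  ring

lemma hasDerivAt_rpow_mul_one_add_rpow {a b x : ℝ} (hx : 0 < x) :
    HasDerivAt (fun y => y ^ a * (1 + y) ^ b)
      (x ^ (a - 1) * (1 + x) ^ (b - 1) * (a + (a + b) * x)) x := by
  have h1x : 0 < 1 + x := by linarith
  have hb : HasDerivAt (fun y => (1 + y) ^ b) (b * (1 + x) ^ (b - 1) * 1) x :=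
    (Real.hasDerivAt_rpow_const (Or.inl h1x.ne')).comp x ((hasDerivAt_id x).const_add 1)
  refine ((Real.hasDerivAt_rpow_const (p := a) (Or.inl hx.ne')).mul hb).congr_deriv ?_
  have hx0 := hx.ne'
  rw [Real.rpow_sub_one hx0, Real.rpow_sub_one h1x.ne']
  field_simp
  ring

section BetaDensity

variable {a b : ℝ}

lemma betaDensity_nonneg (ha : 0 < a) (hb : 0 < b) {y : ℝ} (hy : y ∈ Icc 0 1) :
    0 ≤ betaDensity a b y := by
  have := Real.Gamma_pos_of_pos ha
  have := Real.Gamma_pos_of_pos hb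
  have := Real.Gamma_pos_of_pos (add_pos ha hb)
  have := Real.rpow_nonneg hy.1 (a - 1)
  have := Real.rpow_nonneg (sub_nonneg.2 hy.2) (b - 1)
  unfold betaDensity
  positivity

lemma measurable_betaDensity (a b : ℝ) : Measurable (betaDensity a b) := by
  unfold betaDensity; fun_prop

lemma lintegral_betaDensity (ha : 0 < a) (hb : 0 < b) :
    ∫⁻ y in Ioo 0 1, ENNReal.ofReal (betaDensity a b y) = 1 := by
  simp only [← lintegral_betaPDF_eq_one ha hb, lintegral_betaPDF, betaDensity,
    ProbabilityTheory.beta, one_div_div]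

lemma integrableOn_betaDensity (ha : 0 < a) (hb : 0 < b) :
    IntegrableOn (betaDensity a b) (Icc 0 1) := by
  rw [integrableOn_Icc_iff_integrableOn_Ioo]
  refine ⟨(measurable_betaDensity a b).aestronglyMeasurable, ?_⟩
  rw [hasFiniteIntegral_iff_ofReal, lintegral_betaDensity ha hb]
  · exact ENNReal.one_lt_top
  · exact ae_restrict_of_forall_mem measurableSet_Ioo fun y hy =>
      betaDensity_nonneg ha hb (Ioo_subset_Icc_self hy)

lemma integral_betaDensity (ha : 0 < a) (hb : 0 < b) :
    ∫ y in Icc 0 1, betaDensity a b y = 1 := by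
  rw [integral_Icc_eq_integral_Ioo, integral_eq_lintegral_of_nonneg_ae,
    lintegral_betaDensity ha hb, ENNReal.toReal_one]
  · exact ae_restrict_of_forall_mem measurableSet_Ioo fun y hy =>
      betaDensity_nonneg ha hb (Ioo_subset_Icc_self hy)
  · exact (measurable_betaDensity a b).aestronglyMeasurable

end BetaDensity

section Transform

variable {w : ℝ → ℝ}

lemma half_le_one_add_mul {u₀ u y : ℝ} (hu₀ : 0 ≤ u₀)
    (hu : u ∈ Metric.ball u₀ (1 / 2)) (hy : y ∈ Icc (0 : ℝ) 1) : 1 / 2 ≤ 1 + u * y := by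
  rw [Metric.mem_ball, Real.dist_eq, abs_lt] at hu
  nlinarith [mul_nonneg (by linarith : (0 : ℝ) ≤ u + 1 / 2) hy.1, hy.1, hy.2]

lemma integrableOn_div_one_add_mul_pow (hw : IntegrableOn w (Icc 0 1)) {u : ℝ} (hu : 0 ≤ u)
    (n : ℕ) : IntegrableOn (fun y => w y / (1 + u * y) ^ n) (Icc 0 1) := by
  have hpos : ∀ y ∈ Icc (0 : ℝ) 1, 0 < 1 + u * y := fun y hy => by nlinarith [hy.1]
  simpa only [div_eq_mul_inv] using hw.mul_continuousOn (g' := fun y => ((1 + u * y) ^ n)⁻¹)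
    (ContinuousOn.inv₀ (by fun_prop) fun y hy => (pow_pos (hpos y hy) n).ne') isCompact_Icc

lemma hasDerivAt_integral_div_one_add_mul (hw : IntegrableOn w (Icc 0 1)) {u₀ : ℝ}
    (hu₀ : 0 ≤ u₀) :
    HasDerivAt (fun u => ∫ y in Icc 0 1, w y / (1 + u * y))
      (∫ y in Icc 0 1, -(w y * y / (1 + u₀ * y) ^ 2)) u₀ := by
  have hmeas (g : ℝ → ℝ) (hg : Measurable g) :
      AEStronglyMeasurable (fun y => w y * g y) (volume.restrict (Icc 0 1)) :=
    hw.aestronglyMeasurable.mul hg.aestronglyMeasurable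
  refine (hasDerivAt_integral_of_dominated_loc_of_deriv_le (F := fun u y => w y / (1 + u * y))
    (F' := fun u y => -(w y * y / (1 + u * y) ^ 2)) (bound := fun y => 4 * ‖w y‖)
    (Metric.ball_mem_nhds u₀ one_half_pos) (Eventually.of_forall fun u => ?_)
    (by simpa [IntegrableOn] using integrableOn_div_one_add_mul_pow hw hu₀ 1) ?_ ?_
    (hw.norm.const_mul 4) ?_).2
  · simpa only [div_eq_mul_inv] using hmeas (fun y => (1 + u * y)⁻¹) (by fun_prop)
  · simpa only [mul_div_assoc, neg_mul_eq_mul_neg] using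
      hmeas (fun y => -(y / (1 + u₀ * y) ^ 2)) (by fun_prop)
  · refine ae_restrict_of_forall_mem measurableSet_Icc fun y hy u hu => ?_
    have h := half_le_one_add_mul hu₀ hu hy
    rw [norm_neg, norm_div, norm_mul, norm_pow, Real.norm_of_nonneg (by linarith : 0 ≤ 1 + u * y),
      Real.norm_of_nonneg hy.1, div_le_iff₀ (by positivity)]
    have h2 : 1 / 4 ≤ (1 + u * y) ^ 2 := by nlinarith
    nlinarith [mul_le_mul_of_nonneg_left h2 (norm_nonneg (w y)),
      mul_le_mul_of_nonneg_left hy.2 (norm_nonneg (w y))]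
  · refine ae_restrict_of_forall_mem measurableSet_Icc fun y hy u hu => ?_
    have h := half_le_one_add_mul hu₀ hu hy
    exact ((hasDerivAt_const u (w y)).div ((hasDerivAt_mul_const y).const_add 1)
      (by linarith)).congr_deriv (by ring)

end Transform

noncomputable def betaStieltjes (a b u : ℝ) : ℝ :=
  ∫ y in Icc 0 1, betaDensity a b y / (1 + u * y)

section BetaStieltjes

variable {a b : ℝ}

lemma betaStieltjes_zero (ha : 0 < a) (hb : 0 < b) : betaStieltjes a b 0 = 1 := by
  simpa [betaStieltjes] using integral_betaDensity ha hb

lemma hasDerivAt_betaStieltjes (ha : 0 < a) (hb : 0 < b) {u : ℝ} (hu : 0 ≤ u) :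
    HasDerivAt (betaStieltjes a b)
      (∫ y in Icc 0 1, -(betaDensity a b y * y / (1 + u * y) ^ 2)) u :=
  hasDerivAt_integral_div_one_add_mul (integrableOn_betaDensity ha hb) hu

lemma hasDerivAt_betaStieltjes_primitive {u y : ℝ} (hu : 0 ≤ u) (hy : y ∈ Ioo 0 1) :
    HasDerivAt (fun y => Real.Gamma (a + b) / (Real.Gamma a * Real.Gamma b) * u
        * (y ^ a * (1 - y) ^ b) / (1 + u * y))
      (u * (1 + u) * -(betaDensity a b y * y / (1 + u * y) ^ 2)
        + (a + b - 1 + a * u) * (betaDensity a b y / (1 + u * y))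
        - (a + b - 1) * betaDensity a b y) y := by
  have hy0 := hy.1.ne'
  have h1y := (sub_pos.2 hy.2).ne'
  have hden : 1 + u * y ≠ 0 := by nlinarith [hy.1]
  refine (((hasDerivAt_rpow_mul_one_sub_rpow hy).const_mul _).div
    (((hasDerivAt_id' y).const_mul u).const_add 1) hden).congr_deriv ?_
  rw [betaDensity, Real.rpow_sub_one hy0, Real.rpow_sub_one h1y]
  field_simp
  ring

/-- Integration by parts against the primitive above, which vanishes at `0` and `1`. -/
lemma betaStieltjes_ode (ha : 0 < a) (hb : 0 < b) {u : ℝ} (hu : 0 ≤ u) :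
    u * (1 + u) * deriv (betaStieltjes a b) u + (a + b - 1 + a * u) * betaStieltjes a b u
      = a + b - 1 := by
  set w := betaDensity a b
  have hw := integrableOn_betaDensity ha hb
  have hw₁ : IntegrableOn (fun y => -(w y * y / (1 + u * y) ^ 2)) (Icc 0 1) :=
    (integrableOn_div_one_add_mul_pow (hw.mul_continuousOn continuousOn_id isCompact_Icc) hu 2).neg
  have hw₂ : IntegrableOn (fun y => w y / (1 + u * y)) (Icc 0 1) := by
    simpa using integrableOn_div_one_add_mul_pow hw hu 1
  have hw₁₂ : IntegrableOn (fun y => u * (1 + u) * -(w y * y / (1 + u * y) ^ 2)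
      + (a + b - 1 + a * u) * (w y / (1 + u * y))) (Icc 0 1) :=
    (hw₁.const_mul _).add (hw₂.const_mul _)
  have hFTC := intervalIntegral.integral_eq_sub_of_hasDerivAt_of_le zero_le_one
    (ContinuousOn.div (by fun_prop (disch := positivity)) (by fun_prop)
      fun y hy => by nlinarith [hy.1])
    (fun y hy => hasDerivAt_betaStieltjes_primitive hu hy)
    ((intervalIntegrable_iff_integrableOn_Icc_of_le zero_le_one).2 (hw₁₂.sub (hw.const_mul _)))
  rw [intervalIntegral.integral_of_le zero_le_one, ← integral_Icc_eq_integral_Ioc,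
    integral_sub hw₁₂ (hw.const_mul _), integral_add (hw₁.const_mul _) (hw₂.const_mul _),
    integral_const_mul, integral_const_mul, integral_const_mul, integral_betaDensity ha hb] at hFTC
  rw [(hasDerivAt_betaStieltjes ha hb hu).deriv, betaStieltjes]
  simp only [Pi.div_apply, Real.one_rpow, Real.zero_rpow ha.ne', Real.zero_rpow hb.ne', sub_self,
    sub_zero, mul_zero, mul_one, zero_div, add_zero, div_one] at hFTC
  linarith

end BetaStieltjes

lemma hypergeometric_first_integral {s c : ℝ} {T : ℝ → ℝ} (hT : ContDiffOn ℝ 2 T (Ici 0))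
    (hODE : ∀ u > (0 : ℝ), u * (1 + u) * derivWithin (derivWithin T (Ici 0)) (Ici 0) u
      + (s + (c + 2) * u) * derivWithin T (Ici 0) u + c * T u = 0) {u : ℝ} (hu : 0 ≤ u) :
    u * (1 + u) * derivWithin T (Ici 0) u + (s - 1 + c * u) * T u = (s - 1) * T 0 := by
  set T' := derivWithin T (Ici 0)
  have hT' : ContDiffOn ℝ 1 T' (Ici 0) := hT.derivWithin (uniqueDiffOn_Ici 0) (by norm_num)
  have hderiv {f : ℝ → ℝ} (hf : ContDiffOn ℝ 1 f (Ici 0)) {x : ℝ} (hx : 0 < x) :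
      HasDerivAt f (derivWithin f (Ici 0) x) x :=
    ((hf.differentiableOn one_ne_zero x hx.le).hasDerivWithinAt).hasDerivAt (Ici_mem_nhds hx)
  have h := eq_of_hasDerivAt_eq_zero hu
    (f := fun u => u * (1 + u) * T' u + (s - 1 + c * u) * T u)
    ((by fun_prop : Continuous fun u : ℝ => u * (1 + u)).continuousOn.mul hT'.continuousOn
      |>.add ((by fun_prop : Continuous fun u : ℝ => s - 1 + c * u).continuousOn.mul
        hT.continuousOn) |>.mono Icc_subset_Ici_self)
    fun x hx => by
      have h1 := hderiv hT' hx.1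
      have h2 := hderiv (hT.of_le (by norm_num)) hx.1
      exact ((((hasDerivAt_id' x).mul ((hasDerivAt_id' x).const_add 1)).mul h1).add
        ((((hasDerivAt_id' x).const_mul c).const_add (s - 1)).mul h2)).congr_deriv
        (by simp only [Pi.mul_apply]; linear_combination hODE x hx.1)
  simpa using h

lemma eq_zero_of_ode_of_hasDerivWithinAt {s c d : ℝ} (hs : 0 < s) {D D' : ℝ → ℝ}
    (hD : ∀ u > (0 : ℝ), HasDerivAt D (D' u) u)
    (hode : ∀ u > (0 : ℝ), u * (1 + u) * D' u + (s - 1 + c * u) * D u = 0)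
    (hD0 : D 0 = 0) (hd : HasDerivWithinAt D d (Ioi 0) 0) {u : ℝ} (hu : 0 < u) : D u = 0 := by
  set E : ℝ → ℝ := fun u => D u * (u ^ (s - 1) * (1 + u) ^ (c - s + 1))
  have hE : ∀ x > (0 : ℝ), HasDerivAt E 0 x := fun x hx => by
    refine ((hD x hx).mul (hasDerivAt_rpow_mul_one_add_rpow hx)).congr_deriv ?_
    have hx0 := hx.ne'
    have h1x : 1 + x ≠ 0 := by linarith
    rw [Real.rpow_sub_one hx0 (s - 1), Real.rpow_sub_one h1x (c - s + 1)]
    field_simp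
    linear_combination (x ^ (s - 1) * (1 + x) ^ (c - s + 1)) * hode x hx
  obtain ⟨K, hK⟩ := isOpen_Ioi.exists_is_const_of_deriv_eq_zero isPreconnected_Ioi
    (fun x hx => (hE x hx).differentiableAt.differentiableWithinAt) (fun x hx => (hE x hx).deriv)
  have hslope : ∀ x ∈ Ioi (0 : ℝ), slope D 0 x * (x ^ s * (1 + x) ^ (c - s + 1)) = E x := by
    intro x hx
    have hx0 : x ≠ 0 := ne_of_gt hx
    simp only [E, slope_def_field, hD0, sub_zero, Real.rpow_sub_one hx0]
    field_simp
  have hweight : Tendsto (fun x : ℝ => x ^ s * (1 + x) ^ (c - s + 1)) (𝓝[>] 0) (𝓝 0) := by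
    have : ContinuousAt (fun x : ℝ => x ^ s * (1 + x) ^ (c - s + 1)) 0 := by
      fun_prop (disch := first | positivity | norm_num)
    simpa [Real.zero_rpow hs.ne'] using this.tendsto.mono_left nhdsWithin_le_nhds
  have hE0 : Tendsto E (𝓝[>] 0) (𝓝 0) := by
    simpa using ((hasDerivWithinAt_iff_tendsto_slope' (lt_irrefl 0)).1 hd).mul hweight
      |>.congr' (eventually_nhdsWithin_of_forall hslope)
  have hK0 : K = 0 := tendsto_nhds_unique
    (tendsto_const_nhds.congr' (eventually_nhdsWithin_of_forall fun x hx => (hK x hx).symm)) hE0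
  have hw : 0 < u ^ (s - 1) * (1 + u) ^ (c - s + 1) := by positivity
  simpa [E, hK0, hw.ne'] using hK u hu

theorem stmt9_general (c₁ c₂ : ℝ) (hc₁ : 0 < c₁) (hc₂ : 0 < c₂) (T : ℝ → ℝ)
    (hT : ContDiffOn ℝ 2 T (Set.Ici 0))
    (hODE : ∀ u > (0:ℝ),
      u * (1 + u) * derivWithin (derivWithin T (Set.Ici 0)) (Set.Ici 0) u
        + ((c₁ + c₂) + (c₁ + 2) * u) * derivWithin T (Set.Ici 0) u + c₁ * T u = 0)
    (hT0 : T 0 = 1) :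
    ∀ u ≥ (0:ℝ), T u = ∫ y in Set.Icc (0:ℝ) 1, betaDensity c₁ c₂ y / (1 + u * y) := by
  set G := betaStieltjes c₁ c₂
  have hG {u : ℝ} (hu : 0 ≤ u) : HasDerivAt G (deriv G u) u :=
    (hasDerivAt_betaStieltjes hc₁ hc₂ hu).differentiableAt.hasDerivAt
  have hTd : DifferentiableOn ℝ T (Ici 0) := hT.differentiableOn two_ne_zero
  have hD : ∀ u > (0 : ℝ), HasDerivAt (T - G) (derivWithin T (Ici 0) u - deriv G u) u :=
    fun u hu => ((hTd u hu.le).hasDerivWithinAt.hasDerivAt (Ici_mem_nhds hu)).sub (hG hu.le)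
  have hode : ∀ u > (0 : ℝ), u * (1 + u) * (derivWithin T (Ici 0) u - deriv G u)
      + (c₁ + c₂ - 1 + c₁ * u) * (T u - G u) = 0 := fun u hu => by
    linear_combination hypergeometric_first_integral hT hODE hu.le
      - betaStieltjes_ode hc₁ hc₂ hu.le + (c₁ + c₂ - 1) * hT0
  have hD0 : (T - G) 0 = 0 := by simp [hT0, G, betaStieltjes_zero hc₁ hc₂]
  have hd := ((hTd 0 self_mem_Ici).hasDerivWithinAt.mono Ioi_subset_Ici_self).sub
    (hG le_rfl).hasDerivWithinAt
  intro u hu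
  rcases hu.eq_or_lt with rfl | hu
  · rw [hT0, ← betaStieltjes, betaStieltjes_zero hc₁ hc₂]
  · exact sub_eq_zero.1
      (eq_zero_of_ode_of_hasDerivWithinAt (add_pos hc₁ hc₂) hD hode hD0 hd hu)

theorem stmt9 (c₁ c₂ : ℝ) (hc₁ : 0 < c₁) (hc₂ : 0 < c₂) (T : ℝ → ℝ)
    (hT : ContDiffOn ℝ 2 T (Set.Ici 0))
    (hODE : ∀ u > (0:ℝ),
      u * (1 + u) * derivWithin (derivWithin T (Set.Ici 0)) (Set.Ici 0) u
        + ((c₁ + c₂) + (c₁ + 2) * u) * derivWithin T (Set.Ici 0) u + c₁ * T u = 0)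
    (hT0 : T 0 = 1)
    (hT'0 : derivWithin T (Set.Ici 0) 0 = -c₁ / (c₁ + c₂)) :
    ∀ u ≥ (0:ℝ), T u = ∫ y in Set.Icc (0:ℝ) 1, betaDensity c₁ c₂ y / (1 + u * y) :=
  stmt9_general c₁ c₂ hc₁ hc₂ T hT hODE hT0
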